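/- Let M be an uncountable quasiminimal structure (every M-definable subset of M is countable or co-countable) and p ∈ S₁(M) the generic type consisting of the co-countable formulas. If (M, cl_p) is a quasiminimal pregeometry structure where cl_p(A) = { x ∈ M : x does not realize p restricted to A }, then p does not split over ∅: whenever tp(b̄/∅) = tp(b̄'/∅), for every formula φ the set φ(M, b̄) is countable iff φ(M, b̄') is countable. -/

import Mathlib

open FirstOrder Set

namespace QM

/-- Equality of quantifier-free types of two assignments (possibly in different structures). -/
def EqQF (L : FirstOrder.Language) {M N : Type*} [L.Structure M] [L.Structure N]
    {α : Type*} (a : α → M) (b : α → N) : Prop :=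
  ∀ φ : L.Formula α, φ.IsQF → (φ.Realize a ↔ φ.Realize b)

/-- Equality of quantifier-free types over a parameter set `B`. -/
def EqQFOver (L : FirstOrder.Language) {M : Type*} [L.Structure M] (B : Set M) {n : ℕ}
    (a b : Fin n → M) : Prop :=
  ∀ (m : ℕ) (c : Fin m → M), (∀ i, c i ∈ B) →
    EqQF L (Sum.elim a c) (Sum.elim b c)

/-- A pregeometry (combinatorial closure with exchange). -/
structure Pregeom (M : Type*) where
  cl : Set M → Set M
  subset_cl : ∀ A, A ⊆ cl A
  mono : ∀ ⦃A B : Set M⦄, A ⊆ B → cl A ⊆ cl B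
  cl_idem : ∀ A, cl (cl A) = cl A
  finChar : ∀ (A : Set M) (x : M), x ∈ cl A → ∃ F : Finset M, ↑F ⊆ A ∧ x ∈ cl ↑F
  exchange : ∀ (A : Set M) (a b : M), a ∈ cl (insert b A) → a ∉ cl A → b ∈ cl (insert a A)

variable (L : FirstOrder.Language) (M : Type*) [L.Structure M] (P : Pregeom M)

def Indep (P : Pregeom M) (S : Set M) : Prop := ∀ x ∈ S, x ∉ P.cl (S \ {x})

/-- QM1: the pregeometry is determined by the language. -/
def QM1 : Prop :=
  ∀ (n : ℕ) (a a' : M) (b b' : Fin n → M),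
    EqQF L (Fin.cons a b) (Fin.cons a' b') →
    (a ∈ P.cl (Set.range b) ↔ a' ∈ P.cl (Set.range b'))

/-- QM2: infinite-dimensionality. -/
def QM2 : Prop := ∀ F : Finset M, P.cl ↑F ≠ Set.univ

/-- QM3: countable closure property. -/
def QM3 : Prop := ∀ F : Finset M, (P.cl ↑F).Countable

/-- QM4: uniqueness of the generic type. -/
def QM4 : Prop :=
  ∀ (ι : Type) [Countable ι] (h h' : ι → M),
    P.cl (Set.range h) = Set.range h → P.cl (Set.range h') = Set.range h' →
    EqQF L h h' →
    ∀ a a' : M, a ∉ Set.range h → a' ∉ Set.range h' →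
      EqQF L (Sum.elim h fun _ : Unit => a) (Sum.elim h' fun _ : Unit => a')

/-- QM5: ℵ₀-homogeneity over countable closed sets and the empty set. -/
def QM5 : Prop :=
  ∀ (ι : Type) [Countable ι] (h h' : ι → M) (n : ℕ) (b b' : Fin n → M),
    (P.cl (Set.range h) = Set.range h ∨ Set.range h = ∅) →
    (P.cl (Set.range h') = Set.range h' ∨ Set.range h' = ∅) →
    EqQF L (Sum.elim h b) (Sum.elim h' b') →
    ∀ a ∈ P.cl (Set.range h ∪ Set.range b),
      ∃ a' : M, EqQF L (Sum.elim (Sum.elim h b) fun _ : Unit => a)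
        (Sum.elim (Sum.elim h' b') fun _ : Unit => a')

/-- A weakly quasiminimal pregeometry structure: QM1, QM3, QM4, QM5. -/
structure IsWQPS : Prop where
  qm1 : QM1 L M P
  qm3 : QM3 M P
  qm4 : QM4 L M P
  qm5 : QM5 L M P

/-- A quasiminimal pregeometry structure: additionally QM2. -/
structure IsQPS extends IsWQPS L M P : Prop where
  qm2 : QM2 M P

/-- ℵ₀-homogeneity over the empty set. -/
def HomogEmpty : Prop :=
  ∀ (n m : ℕ) (b b' : Fin n → M), EqQF L b b' →
    ∀ a : Fin m → M, ∃ a' : Fin m → M, EqQF L (Sum.elim a b) (Sum.elim a' b')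

/-- `tp(ā/B)` splits over `A`. -/
def SplitsOver (B A : Set M) {n : ℕ} (a : Fin n → M) : Prop :=
  ∃ (m : ℕ) (c d : Fin m → M), (∀ i, c i ∈ B) ∧ (∀ i, d i ∈ B) ∧
    EqQFOver L A c d ∧ ¬ EqQFOver L (A ∪ Set.range a) c d

/-- `tp(b̄/B)` is s-isolated (for `b̄ ∈ cl B`). -/
def SIsolated (B : Set M) {n : ℕ} (b : Fin n → M) : Prop :=
  ∃ A₀ : Finset M, ↑A₀ ⊆ B ∧
    ∀ b' : Fin n → M, (∀ i, b' i ∈ P.cl B) →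
      EqQFOver L (↑A₀ : Set M) b' b → EqQFOver L B b' b


/-- The solution set `φ(M, b̄)` of a formula with parameters `b̄`. -/
def solSet (L : FirstOrder.Language) (M : Type*) [L.Structure M] {n : ℕ}
    (φ : L.Formula (Fin (n + 1))) (b : Fin n → M) : Set M :=
  {x : M | φ.Realize (Fin.cons x b)}

/-- `M` is quasiminimal: every definable subset (with parameters) is countable or
co-countable. -/
def Quasiminimal (L : FirstOrder.Language) (M : Type*) [L.Structure M] : Prop :=
  ∀ (n : ℕ) (φ : L.Formula (Fin (n + 1))) (b : Fin n → M),
    (solSet L M φ b).Countable ∨ (solSet L M φ b)ᶜ.Countable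

/-- The quasiminimal closure: `x ∈ cl_p A` iff `x` does not realize the generic
(co-countable) type over `A`, i.e. `x` satisfies some countable formula over `A`. -/
def clp (L : FirstOrder.Language) (M : Type*) [L.Structure M] (A : Set M) : Set M :=
  {x : M | ∃ (n : ℕ) (φ : L.Formula (Fin (n + 1))) (b : Fin n → M),
    (∀ i, b i ∈ A) ∧ (solSet L M φ b).Countable ∧ x ∈ solSet L M φ b}

/-- Equality of complete first-order types. -/
def EqFull (L : FirstOrder.Language) {M : Type*} [L.Structure M] {α : Type*}
    (a b : α → M) : Prop :=
  ∀ φ : L.Formula α, φ.Realize a ↔ φ.Realize b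

/-- Quantifier elimination for types realized in `M`: quantifier-free types determine
complete types. -/
def QEr (L : FirstOrder.Language) (M : Type*) [L.Structure M] : Prop :=
  ∀ (n : ℕ) (a b : Fin n → M), EqQF L a b → EqFull L a b


/-!
The closures `cl(b̄)` and `cl(b̄')` are countable (QM3), and a back-and-forth argument driven by
QM5, with QM1 keeping both sides inside the closures, matches them by a bijection preserving
quantifier-free types. QM4 extends this matching by any pair of generic elements, so a generic
solution `a'` of `φ(x, b̄')` is matched with a generic `a`, which solves `φ(x, b̄)` by quantifier
elimination. If `φ(M, b̄)` is countable, all its solutions lie in `cl_p(b̄)`, so there is no such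
`a'`, and quasiminimality makes `φ(M, b̄')` countable.
-/

theorem _root_.Set.Countable.exists_notMem {α : Type*} [Uncountable α] {s : Set α}
    (hs : s.Countable) : ∃ a, a ∉ s :=
  (ne_univ_iff_exists_notMem s).1 fun h => not_countable_univ (h ▸ hs)

section

variable {L M P} {α β : Type*} {a b : α → M}

theorem EqQF.symm (h : EqQF L a b) : EqQF L b a :=
  fun φ hφ => (h φ hφ).symm

theorem EqQF.comp (h : EqQF L a b) (f : β → α) : EqQF L (a ∘ f) (b ∘ f) := by
  intro φ hφ
  rw [← Language.Formula.realize_relabel, ← Language.Formula.realize_relabel]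
  exact h _ (hφ.relabel _)

theorem realize_iff_of_eqOn_freeVarFinset [DecidableEq α] {φ : L.Formula α}
    (h : ∀ i ∈ φ.freeVarFinset, a i = b i) : φ.Realize a ↔ φ.Realize b := by
  have hab : a ∘ ((↑) : ↥(φ.freeVarFinset : Set α) → α) = b ∘ (↑) := funext fun i => h i i.2
  unfold Language.Formula.Realize
  rw [← Language.BoundedFormula.realize_restrictFreeVar' subset_rfl, hab,
    Language.BoundedFormula.realize_restrictFreeVar']

theorem EqQF.of_forall_finset
    (h : ∀ s : Finset α, EqQF L (fun i : s => a i) (fun i : s => b i)) : EqQF L a b := by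
  classical
  intro φ hφ
  rcases isEmpty_or_nonempty α with _ | ⟨⟨i₀⟩⟩
  · rw [Subsingleton.elim a b]
  set s := insert i₀ φ.freeVarFinset
  let r : α → s := fun i => if hi : i ∈ s then ⟨i, hi⟩ else ⟨i₀, Finset.mem_insert_self _ _⟩
  have hr : ∀ i ∈ φ.freeVarFinset, (r i : α) = i := fun i hi => by simp [r, s, hi]
  calc φ.Realize a ↔ φ.Realize ((fun i : s => a i) ∘ r) :=
        realize_iff_of_eqOn_freeVarFinset fun i hi => by simp [hr i hi]
    _ ↔ φ.Realize ((fun i : s => b i) ∘ r) := (h s).comp r φ hφ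
    _ ↔ φ.Realize b := realize_iff_of_eqOn_freeVarFinset fun i hi => by simp [hr i hi]

/-- Such an `S` is the graph of an injective partial map, since `x = y` is quantifier-free. -/
def IsPartialIso (L : FirstOrder.Language) {M : Type*} [L.Structure M] (S : Set (M × M)) :
    Prop :=
  EqQF L (fun p : S => p.1.1) (fun p : S => p.1.2)

theorem isPartialIso_range {ι : Type*} {c c' : ι → M} (hc : EqQF L c c') :
    IsPartialIso L (range fun i => (c i, c' i)) := by
  choose σ hσ using fun p : range fun i => (c i, c' i) => p.2
  show EqQF L _ _
  convert hc.comp σ using 1 <;> funext p <;> simp [← hσ p]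

theorem isPartialIso_iUnion {ι : Type*} [Nonempty ι] {S : ι → Set (M × M)}
    (hdir : Directed (· ⊆ ·) S) (hS : ∀ i, IsPartialIso L (S i)) :
    IsPartialIso L (⋃ i, S i) := by
  refine EqQF.of_forall_finset fun s => ?_
  obtain ⟨i, hi⟩ := hdir.exists_mem_subset_of_finset_subset_biUnion
    (s := s.map (.subtype _)) (by rw [Finset.coe_map]; rintro _ ⟨p, -, rfl⟩; exact p.2)
  exact (hS i).comp fun p : s => ⟨p.1.1, hi (Finset.mem_map_of_mem _ p.2)⟩

theorem isPartialIso_insert {S : Set (M × M)} {x y : M}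
    (h : EqQF L (Sum.elim (fun p : S => p.1.1) fun _ : Unit => x)
      (Sum.elim (fun p : S => p.1.2) fun _ : Unit => y)) :
    IsPartialIso L (insert (x, y) S) := by
  classical
  let r : ↥(insert (x, y) S) → S ⊕ Unit := fun p => if hp : p.1 ∈ S then .inl ⟨p, hp⟩ else .inr ()
  show EqQF L _ _
  convert h.comp r using 1 <;> funext ⟨p, hp⟩ <;> simp only [Function.comp_apply, r] <;>
    split <;> simp_all

theorem eqQF_cons_of_eqQF_sum_elim {S : Set (M × M)} {x y : M} {n : ℕ} {b b' : Fin n → M}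
    (h : EqQF L (Sum.elim (fun p : S => p.1.1) fun _ : Unit => x)
      (Sum.elim (fun p : S => p.1.2) fun _ : Unit => y))
    (hb : ∀ i, (b i, b' i) ∈ S) :
    EqQF L (Fin.cons x b : Fin (n + 1) → M) (Fin.cons y b') := by
  convert h.comp (Fin.cons (.inr ()) fun i => .inl ⟨(b i, b' i), hb i⟩) using 1 <;>
    simp [Fin.comp_cons] <;> rfl

theorem QM3.countable_cl_range (h3 : QM3 M P) {n : ℕ} (d : Fin n → M) :
    (P.cl (range d)).Countable := by
  classical
  simpa using h3 (Finset.univ.image d)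

theorem QM5.exists_eqQF_sum_elim (h5 : QM5 L M P) {α : Type*} [Finite α] {c c' : α → M}
    (hc : EqQF L c c') {x : M} (hx : x ∈ P.cl (range c)) :
    ∃ y, EqQF L (Sum.elim c fun _ : Unit => x) (Sum.elim c' fun _ : Unit => y) := by
  obtain ⟨m, ⟨e⟩⟩ := Finite.exists_equiv_fin α
  have hce : ∀ d : α → M, Sum.elim (Empty.elim : Empty → M) (d ∘ e.symm) =
      d ∘ Sum.elim Empty.elim e.symm := fun d => by
    funext i; rcases i with i | i
    · exact i.elim
    · rfl
  obtain ⟨y, hy⟩ := h5 Empty Empty.elim Empty.elim m (c ∘ e.symm) (c' ∘ e.symm)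
    (.inr (range_eq_empty _)) (.inr (range_eq_empty _)) (by rw [hce, hce]; exact hc.comp _) x
    (by rwa [range_eq_empty, empty_union, EquivLike.range_comp])
  refine ⟨y, ?_⟩
  convert hy.comp (Sum.map (Sum.inr ∘ e) id) using 1 <;> funext i <;> rcases i with i | i <;> simp

theorem QM4.eqQF_sum_elim (h4 : QM4 L M P) {ι : Type*} [Countable ι] {c c' : ι → M}
    (hcl : P.cl (range c) = range c) (hcl' : P.cl (range c') = range c') (hc : EqQF L c c')
    {a a' : M} (ha : a ∉ range c) (ha' : a' ∉ range c') :
    EqQF L (Sum.elim c fun _ : Unit => a) (Sum.elim c' fun _ : Unit => a') := by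
  obtain ⟨f, hf⟩ := Countable.exists_injective_nat ι
  let e := Equiv.ofInjective f hf
  have key := h4 (range f) (c ∘ e.symm) (c' ∘ e.symm) (by rwa [EquivLike.range_comp])
    (by rwa [EquivLike.range_comp]) (hc.comp _) a a' (by rwa [EquivLike.range_comp])
    (by rwa [EquivLike.range_comp])
  convert key.comp (Sum.map e id) using 1 <;> funext i <;> rcases i with i | i <;> simp

theorem exists_isPartialIso_image_eq {A B : Set M} (hA : A.Countable) (hB : B.Countable)
    (S₀ : Finset (M × M)) (h₀ : IsPartialIso L (S₀ : Set (M × M))) (h₀AB : ↑S₀ ⊆ A ×ˢ B)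
    (forth : ∀ S : Finset (M × M), S₀ ⊆ S → IsPartialIso L (S : Set (M × M)) → ↑S ⊆ A ×ˢ B →
      ∀ x ∈ A, ∃ y ∈ B, IsPartialIso L (insert (x, y) (S : Set (M × M))))
    (back : ∀ S : Finset (M × M), S₀ ⊆ S → IsPartialIso L (S : Set (M × M)) → ↑S ⊆ A ×ˢ B →
      ∀ y ∈ B, ∃ x ∈ A, IsPartialIso L (insert (x, y) (S : Set (M × M)))) :
    ∃ U : Set (M × M), ↑S₀ ⊆ U ∧ IsPartialIso L U ∧ U ⊆ A ×ˢ B ∧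
      Prod.fst '' U = A ∧ Prod.snd '' U = B := by
  classical
  have := hA.to_subtype
  have := hB.to_subtype
  let : Encodable (A ⊕ B) := Encodable.ofCountable _
  let Good (S : Finset (M × M)) : Prop := S₀ ⊆ S ∧ IsPartialIso L (S : Set (M × M)) ∧ ↑S ⊆ A ×ˢ B
  have grow : ∀ S, Good S → ∀ x ∈ A, ∀ y ∈ B, IsPartialIso L (insert (x, y) (S : Set (M × M))) →
      Good (insert (x, y) S) := fun S hS x hx y hy hxy =>
    ⟨hS.1.trans (Finset.subset_insert _ _), by rwa [Finset.coe_insert],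
      by rw [Finset.coe_insert]; exact insert_subset ⟨hx, hy⟩ hS.2.2⟩
  let D : A ⊕ B → Order.Cofinal {S // Good S} := Sum.elim
    (fun x => ⟨{S | x.1 ∈ Prod.fst '' (S.1 : Set (M × M))}, fun S => by
      obtain ⟨y, hy, hxy⟩ := forth S.1 S.2.1 S.2.2.1 S.2.2.2 x.1 x.2
      exact ⟨⟨_, grow S.1 S.2 x.1 x.2 y hy hxy⟩, ⟨(x.1, y), by simp, rfl⟩,
        Finset.subset_insert _ _⟩⟩)
    (fun y => ⟨{S | y.1 ∈ Prod.snd '' (S.1 : Set (M × M))}, fun S => by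
      obtain ⟨x, hx, hxy⟩ := back S.1 S.2.1 S.2.2.1 S.2.2.2 y.1 y.2
      exact ⟨⟨_, grow S.1 S.2 x hx y.1 y.2 hxy⟩, ⟨(x, y.1), by simp, rfl⟩,
        Finset.subset_insert _ _⟩⟩)
  let seq := Order.sequenceOfCofinals ⟨S₀, subset_rfl, h₀, h₀AB⟩ D
  have hmono : Monotone fun k => ((seq k).1 : Set (M × M)) := fun i j hij =>
    Finset.coe_subset.2 (show seq i ≤ seq j from Order.sequenceOfCofinals.monotone _ _ hij)
  have hUAB : (⋃ k, ((seq k).1 : Set (M × M))) ⊆ A ×ˢ B := iUnion_subset fun k => (seq k).2.2.2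
  refine ⟨⋃ k, ((seq k).1 : Set (M × M)), subset_iUnion_of_subset 0 subset_rfl,
    isPartialIso_iUnion hmono.directed_le fun k => (seq k).2.2.1, hUAB,
    (image_mono hUAB).trans (fst_image_prod_subset _ _) |>.antisymm fun x hx => ?_,
    (image_mono hUAB).trans (snd_image_prod_subset _ _) |>.antisymm fun y hy => ?_⟩
  · obtain ⟨p, hp, hpx⟩ := Order.sequenceOfCofinals.encode_mem _ D (.inl ⟨x, hx⟩)
    exact ⟨p, mem_iUnion_of_mem _ hp, hpx⟩
  · obtain ⟨p, hp, hpy⟩ := Order.sequenceOfCofinals.encode_mem _ D (.inr ⟨y, hy⟩)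
    exact ⟨p, mem_iUnion_of_mem _ hp, hpy⟩

theorem IsWQPS.exists_isPartialIso_cl (h : IsWQPS L M P) {n : ℕ} {b b' : Fin n → M}
    (hbb' : EqQF L b b') :
    ∃ U : Set (M × M), (∀ i, (b i, b' i) ∈ U) ∧ IsPartialIso L U ∧ U.Countable ∧
      Prod.fst '' U = P.cl (range b) ∧ Prod.snd '' U = P.cl (range b') := by
  classical
  have hcl : ∀ d : Fin n → M, (P.cl (range d)).Countable := h.qm3.countable_cl_range
  let S₀ := Finset.univ.image fun i => (b i, b' i)
  have hS₀ : ∀ i, (b i, b' i) ∈ S₀ := fun i => Finset.mem_image_of_mem _ (Finset.mem_univ i)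
  have hb : ∀ S : Finset (M × M), S₀ ⊆ S →
      range b ⊆ range fun p : (S : Set (M × M)) => p.1.1 := fun S hS _ ⟨i, hi⟩ =>
    ⟨⟨_, hS (hS₀ i)⟩, hi⟩
  have hb' : ∀ S : Finset (M × M), S₀ ⊆ S →
      range b' ⊆ range fun p : (S : Set (M × M)) => p.1.2 := fun S hS _ ⟨i, hi⟩ =>
    ⟨⟨_, hS (hS₀ i)⟩, hi⟩
  obtain ⟨U, hS₀U, hU, hUcl, hfst, hsnd⟩ := exists_isPartialIso_image_eq (hcl b) (hcl b') S₀
    (by simpa [S₀] using isPartialIso_range hbb')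
    (by simpa [S₀, subset_def] using fun i => ⟨P.subset_cl _ (mem_range_self i),
      P.subset_cl _ (mem_range_self i)⟩)
    (fun S hS₀S hS _ x hx => by
      obtain ⟨y, hxy⟩ := h.qm5.exists_eqQF_sum_elim hS (P.mono (hb S hS₀S) hx)
      exact ⟨y, (h.qm1 n x y b b' (eqQF_cons_of_eqQF_sum_elim hxy fun i => hS₀S (hS₀ i))).1 hx,
        isPartialIso_insert hxy⟩)
    (fun S hS₀S hS _ y hy => by
      obtain ⟨x, hxy⟩ := h.qm5.exists_eqQF_sum_elim hS.symm (P.mono (hb' S hS₀S) hy)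
      exact ⟨x, (h.qm1 n x y b b'
        (eqQF_cons_of_eqQF_sum_elim hxy.symm fun i => hS₀S (hS₀ i))).2 hy,
        isPartialIso_insert hxy.symm⟩)
  exact ⟨U, fun i => hS₀U (hS₀ i), hU, ((hcl b).prod (hcl b')).mono hUcl, hfst, hsnd⟩

theorem IsWQPS.exists_eqQF_cons_of_notMem_cl [Uncountable M] (h : IsWQPS L M P) {n : ℕ}
    {b b' : Fin n → M} (hbb' : EqQF L b b') {a' : M} (ha' : a' ∉ P.cl (range b')) :
    ∃ a ∉ P.cl (range b), EqQF L (Fin.cons a b : Fin (n + 1) → M) (Fin.cons a' b') := by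
  obtain ⟨U, hbU, hU, hUc, hfst, hsnd⟩ := h.exists_isPartialIso_cl hbb'
  have : Countable U := hUc.to_subtype
  have hr : range (fun p : U => p.1.1) = P.cl (range b) := by rw [← image_eq_range, hfst]
  have hr' : range (fun p : U => p.1.2) = P.cl (range b') := by rw [← image_eq_range, hsnd]
  obtain ⟨a, ha⟩ := (hfst ▸ hUc.image Prod.fst : (P.cl (range b)).Countable).exists_notMem
  have hcl : P.cl (range fun p : U => p.1.1) = range fun p : U => p.1.1 := by
    rw [hr, P.cl_idem]
  have hcl' : P.cl (range fun p : U => p.1.2) = range fun p : U => p.1.2 := by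
    rw [hr', P.cl_idem]
  exact ⟨a, ha, eqQF_cons_of_eqQF_sum_elim
    (h.qm4.eqQF_sum_elim hcl hcl' hU (hr ▸ ha) (hr' ▸ ha')) hbU⟩

theorem IsWQPS.countable_solSet_of_eqFull [Uncountable M] (hq : Quasiminimal L M)
    (hqe : QEr L M) (hP : P.cl = clp L M) (h : IsWQPS L M P) {n : ℕ} {b b' : Fin n → M}
    (hbb' : EqFull L b b') {φ : L.Formula (Fin (n + 1))} (hb : (solSet L M φ b).Countable) :
    (solSet L M φ b').Countable := by
  by_contra hb'
  obtain ⟨a', ha'⟩ :=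
    (((hq n φ b').resolve_left hb').union (h.qm3.countable_cl_range b')).exists_notMem
  rw [mem_union, not_or, notMem_compl_iff] at ha'
  obtain ⟨a, ha, haa'⟩ := h.exists_eqQF_cons_of_notMem_cl (fun ψ _ => hbb' ψ) ha'.2
  apply ha
  rw [hP]
  exact ⟨n, φ, b, mem_range_self, hb, (hqe _ _ _ haa' φ).2 ha'.1⟩

end

/-- if `(M, cl_p)` is a quasiminimal pregeometry structure, then the
generic type does not split over ∅: tuples of the same type give parameter sets of the
same (countable/co-countable) size for every formula. -/
theorem generic_nonsplitting (L : FirstOrder.Language) (M : Type*) [L.Structure M]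
    [Uncountable M] (hq : Quasiminimal L M) (hqe : QEr L M) (P : Pregeom M)
    (hP : P.cl = clp L M) (h : IsQPS L M P) :
    ∀ (n : ℕ) (b b' : Fin n → M), EqFull L b b' →
      ∀ φ : L.Formula (Fin (n + 1)),
        ((solSet L M φ b).Countable ↔ (solSet L M φ b').Countable) :=
  fun _ _ _ hbb' _ => ⟨h.countable_solSet_of_eqFull hq hqe hP hbb',
    h.countable_solSet_of_eqFull hq hqe hP fun ψ => (hbb' ψ).symm⟩

end QM
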